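/- (ER holds under arbitrary sampling with finite second moments.) Assume each f_i is L_i-smooth and bounded below with f_i* = inf_x f_i(x), that f attains its minimum at some point x*, and that E_𝒟[v_i²] < ∞ for all i. Set σ* = (1/n)∑_{i=1}^n (f_i(x*) − f_i*) ≥ 0 and A = max_i L_i·E_𝒟[v_i²]. Then for all x ∈ ℝ^d, E_v‖g(x,v)‖² ≤ 2A·(f(x) − f^inf) + 2A·σ*; i.e., the ER condition holds with constants A = max_i L_i E[v_i²], B = 0, and C = 2Aσ*. -/

import Mathlib

/-!
Each `f i` is `L i`-smooth and bounded below, so the descent lemma at the point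
`x - (L i)⁻¹ • ∇f_i x` gives `‖∇f_i x‖² ≤ 2 L_i (f_i x - inf f_i)`. Jensen's inequality bounds
`‖g(x, v)‖²` by `(1/n) ∑ v_i² ‖∇f_i x‖²`; after taking expectations and bounding
`L_i E[v_i²]` by `A`, the average `(1/n) ∑ (f_i x - inf f_i)` splits as `(f x - f x*) + σ*`.
-/

open MeasureTheory

noncomputable section

/-- The finite-sum objective `f(x) = (1/n) ∑ i, f i x`. -/
def favg {n d : ℕ} (f : Fin n → EuclideanSpace ℝ (Fin d) → ℝ)
    (x : EuclideanSpace ℝ (Fin d)) : ℝ :=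
  (n : ℝ)⁻¹ * ∑ i, f i x

/-- The stochastic gradient `g(x, v) = (1/n) ∑ i, v i • ∇ f i x`. -/
def sgrad {n d : ℕ} (f : Fin n → EuclideanSpace ℝ (Fin d) → ℝ)
    (x : EuclideanSpace ℝ (Fin d)) (v : Fin n → ℝ) : EuclideanSpace ℝ (Fin d) :=
  (n : ℝ)⁻¹ • ∑ i, v i • gradient (f i) x

section Smooth

variable {E : Type*} [NormedAddCommGroup E] [InnerProductSpace ℝ E] [CompleteSpace E]
  {f : E → ℝ} {L : ℝ}

theorem hasDerivAt_comp_add_smul (x u : E) {t : ℝ} (hf : DifferentiableAt ℝ f (x + t • u)) :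
    HasDerivAt (fun s : ℝ => f (x + s • u)) (inner ℝ (gradient f (x + t • u)) u) t := by
  have hline : HasDerivAt (fun s : ℝ => x + s • u) u t := by
    simpa using ((hasDerivAt_id t).smul_const u).const_add x
  have hgrad : HasFDerivAt f (InnerProductSpace.toDual ℝ E (gradient f (x + t • u))) (x + t • u) :=
    hf.hasGradientAt.hasFDerivAt
  have hcomp := hgrad.comp_hasDerivAt t hline
  simp only [InnerProductSpace.toDual_apply_apply] at hcomp
  exact hcomp

theorem le_add_inner_gradient_add_of_lipschitzWith (hL : 0 ≤ L) (hf : Differentiable ℝ f)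
    (hlip : LipschitzWith L.toNNReal (gradient f)) (x u : E) :
    f (x + u) ≤ f x + inner ℝ (gradient f x) u + L / 2 * ‖u‖ ^ 2 := by
  set φ : ℝ → ℝ := fun t => f (x + t • u) - t * inner ℝ (gradient f x) u - L / 2 * t ^ 2 * ‖u‖ ^ 2
  have hφ : ∀ t, HasDerivAt φ
      (inner ℝ (gradient f (x + t • u) - gradient f x) u - L * t * ‖u‖ ^ 2) t := by
    intro t
    have hquad : HasDerivAt (fun s : ℝ => L / 2 * s ^ 2 * ‖u‖ ^ 2) (L * t * ‖u‖ ^ 2) t := by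
      have hcoef : L / 2 * ((2 : ℕ) * t ^ (2 - 1)) * ‖u‖ ^ 2 = L * t * ‖u‖ ^ 2 := by
        simp only [Nat.cast_ofNat, Nat.add_one_sub_one, pow_one]; ring
      exact (((hasDerivAt_pow 2 t).const_mul (L / 2)).mul_const _).congr_deriv hcoef
    have := ((hasDerivAt_comp_add_smul x u (hf _)).sub
      ((hasDerivAt_id t).mul_const (inner ℝ (gradient f x) u))).sub hquad
    rw [inner_sub_left]
    exact this.congr_deriv (by ring)
  have hφ' : ∀ t ∈ interior (Set.Icc (0 : ℝ) 1), deriv φ t ≤ 0 := by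
    intro t ht
    rw [interior_Icc] at ht
    have hgrad : ‖gradient f (x + t • u) - gradient f x‖ ≤ L * (t * ‖u‖) := by
      simpa [← dist_eq_norm, norm_smul, abs_of_pos ht.1, Real.coe_toNNReal L hL]
        using hlip.dist_le_mul (x + t • u) x
    calc deriv φ t
        ≤ ‖gradient f (x + t • u) - gradient f x‖ * ‖u‖ - L * t * ‖u‖ ^ 2 := by
          rw [(hφ t).deriv]; gcongr; exact real_inner_le_norm _ _
      _ ≤ 0 := by nlinarith [norm_nonneg u]
  have hanti : AntitoneOn φ (Set.Icc 0 1) :=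
    antitoneOn_of_deriv_nonpos (convex_Icc 0 1)
      (fun t _ => (hφ t).continuousAt.continuousWithinAt)
      (fun t _ => (hφ t).differentiableAt.differentiableWithinAt) hφ'
  have h10 : φ 1 ≤ φ 0 := hanti (by simp) (by simp) zero_le_one
  simp only [φ, one_smul, zero_smul, add_zero] at h10
  linarith

theorem le_two_mul_mul_of_forall_mul_sub_le {a D : ℝ} (hL : 0 ≤ L)
    (h : ∀ t, 0 ≤ t → t * a - L / 2 * t ^ 2 * a ≤ D) : a ≤ 2 * L * D := by
  rcases hL.eq_or_lt with rfl | hLpos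
  · -- with `L = 0`, `t * a ≤ D` for every `t ≥ 0` forces `a = 0`
    by_contra! hlt
    have hapos : 0 < a := by linarith
    have hD : 0 ≤ D := by simpa using h 0 le_rfl
    have := h ((D + 1) / a) (by positivity)
    rw [div_mul_cancel₀ _ hapos.ne'] at this
    linarith
  · have := h L⁻¹ (by positivity)
    field_simp at this
    nlinarith

theorem sq_norm_gradient_le_of_lipschitzWith (hL : 0 ≤ L) (hf : Differentiable ℝ f)
    (hlip : LipschitzWith L.toNNReal (gradient f)) (hb : BddBelow (Set.range f)) (x : E) :
    ‖gradient f x‖ ^ 2 ≤ 2 * L * (f x - ⨅ y, f y) := by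
  refine le_two_mul_mul_of_forall_mul_sub_le hL fun t _ => ?_
  have hdescent := le_add_inner_gradient_add_of_lipschitzWith hL hf hlip x (-t • gradient f x)
  rw [real_inner_smul_right, real_inner_self_eq_norm_sq, norm_smul, mul_pow, Real.norm_eq_abs,
    sq_abs] at hdescent
  linarith [ciInf_le hb (x + -t • gradient f x)]

end Smooth

theorem sq_norm_sum_le_card_mul_sum_sq_norm {ι F : Type*} [SeminormedAddCommGroup F]
    (s : Finset ι) (w : ι → F) : ‖∑ i ∈ s, w i‖ ^ 2 ≤ s.card * ∑ i ∈ s, ‖w i‖ ^ 2 :=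
  (pow_le_pow_left₀ (norm_nonneg _) (norm_sum_le _ _) 2).trans sq_sum_le_card_mul_sum_sq

section StochasticGradient

variable {n d : ℕ} (f : Fin n → EuclideanSpace ℝ (Fin d) → ℝ) (x : EuclideanSpace ℝ (Fin d))

theorem sq_norm_sgrad_le (v : Fin n → ℝ) :
    ‖sgrad f x v‖ ^ 2 ≤ (n : ℝ)⁻¹ * ∑ i, v i ^ 2 * ‖gradient (f i) x‖ ^ 2 := by
  have hsum := sq_norm_sum_le_card_mul_sum_sq_norm Finset.univ fun i => v i • gradient (f i) x
  simp only [Finset.card_univ, Fintype.card_fin, norm_smul, mul_pow, Real.norm_eq_abs,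
    sq_abs] at hsum
  calc ‖sgrad f x v‖ ^ 2 = ((n : ℝ)⁻¹) ^ 2 * ‖∑ i, v i • gradient (f i) x‖ ^ 2 := by
        rw [sgrad, norm_smul, mul_pow, Real.norm_eq_abs, sq_abs]
    _ ≤ ((n : ℝ)⁻¹) ^ 2 * (n * ∑ i, v i ^ 2 * ‖gradient (f i) x‖ ^ 2) := by gcongr
    _ = (n : ℝ)⁻¹ * ∑ i, v i ^ 2 * ‖gradient (f i) x‖ ^ 2 := by
        rcases n.eq_zero_or_pos with rfl | hn
        · simp
        · field_simp

theorem integral_sq_norm_sgrad_le {μ : Measure (Fin n → ℝ)}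
    (hv2 : ∀ i, Integrable (fun v => v i ^ 2) μ) :
    ∫ v, ‖sgrad f x v‖ ^ 2 ∂μ ≤ (n : ℝ)⁻¹ * ∑ i, (∫ v, v i ^ 2 ∂μ) * ‖gradient (f i) x‖ ^ 2 := by
  have hint : ∀ i, Integrable (fun v => v i ^ 2 * ‖gradient (f i) x‖ ^ 2) μ :=
    fun i => (hv2 i).mul_const _
  calc ∫ v, ‖sgrad f x v‖ ^ 2 ∂μ
      ≤ ∫ v, (n : ℝ)⁻¹ * ∑ i, v i ^ 2 * ‖gradient (f i) x‖ ^ 2 ∂μ :=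
        integral_mono_of_nonneg (.of_forall fun _ => by positivity)
          ((integrable_finsetSum _ fun i _ => hint i).const_mul _)
          (.of_forall (sq_norm_sgrad_le f x))
    _ = (n : ℝ)⁻¹ * ∑ i, (∫ v, v i ^ 2 ∂μ) * ‖gradient (f i) x‖ ^ 2 := by
        simp only [integral_const_mul, integral_finsetSum _ fun i _ => hint i, integral_mul_const]

end StochasticGradient

theorem ER_of_arbitrary_sampling_general
    {d n : ℕ} (hn : 0 < n)
    (f : Fin n → EuclideanSpace ℝ (Fin d) → ℝ)
    (L : Fin n → ℝ) (hLnonneg : ∀ i, 0 ≤ L i)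
    (hdiff : ∀ i, Differentiable ℝ (f i))
    (hsmooth : ∀ i, LipschitzWith (L i).toNNReal (gradient (f i)))
    (hbelow : ∀ i, BddBelow (Set.range (f i)))
    (xstar : EuclideanSpace ℝ (Fin d)) (hmin : ∀ y, favg f xstar ≤ favg f y)
    (𝒟 : Measure (Fin n → ℝ))
    -- finite second moments `E[v i ^ 2] < ∞`
    (hv2 : ∀ i, Integrable (fun v => (v i) ^ 2) 𝒟)
    -- `σ* = (1/n) ∑ i, (f i x* − inf f i)` and `A = max_i L i · E[v i ^ 2]`
    (σstar A : ℝ)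
    (hσstar : σstar = (n : ℝ)⁻¹ * ∑ i, (f i xstar - ⨅ y, f i y))
    (hAdef : A = Finset.univ.sup'
      (Finset.univ_nonempty_iff.mpr (Fin.pos_iff_nonempty.mp hn))
      (fun i => L i * ∫ v, (v i) ^ 2 ∂𝒟)) :
    ∀ x, ∫ v, ‖sgrad f x v‖ ^ 2 ∂𝒟 ≤
      2 * A * (favg f x - ⨅ y, favg f y) + 2 * A * σstar := by
  intro x
  have hinf : ⨅ y, favg f y = favg f xstar :=
    ciInf_eq_of_forall_ge_of_forall_gt_exists_lt hmin fun _ h => ⟨xstar, h⟩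
  have hterm : ∀ i, (∫ v, v i ^ 2 ∂𝒟) * ‖gradient (f i) x‖ ^ 2 ≤ 2 * A * (f i x - ⨅ y, f i y) := by
    intro i
    have hA : L i * ∫ v, v i ^ 2 ∂𝒟 ≤ A :=
      hAdef ▸ Finset.le_sup' (fun i => L i * ∫ v, v i ^ 2 ∂𝒟) (Finset.mem_univ i)
    calc (∫ v, v i ^ 2 ∂𝒟) * ‖gradient (f i) x‖ ^ 2
        ≤ (∫ v, v i ^ 2 ∂𝒟) * (2 * L i * (f i x - ⨅ y, f i y)) := by
          refine mul_le_mul_of_nonneg_left ?_ (integral_nonneg fun v => sq_nonneg _)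
          exact sq_norm_gradient_le_of_lipschitzWith (hLnonneg i) (hdiff i) (hsmooth i) (hbelow i) x
      _ = 2 * (L i * ∫ v, v i ^ 2 ∂𝒟) * (f i x - ⨅ y, f i y) := by ring
      _ ≤ 2 * A * (f i x - ⨅ y, f i y) := by
          gcongr
          exact sub_nonneg.mpr (ciInf_le (hbelow i) x)
  calc ∫ v, ‖sgrad f x v‖ ^ 2 ∂𝒟
      ≤ (n : ℝ)⁻¹ * ∑ i, (∫ v, v i ^ 2 ∂𝒟) * ‖gradient (f i) x‖ ^ 2 :=
        integral_sq_norm_sgrad_le f x hv2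
    _ ≤ (n : ℝ)⁻¹ * ∑ i, 2 * A * (f i x - ⨅ y, f i y) :=
        mul_le_mul_of_nonneg_left (Finset.sum_le_sum fun i _ => hterm i) (by positivity)
    _ = 2 * A * (favg f x - ⨅ y, favg f y) + 2 * A * σstar := by
        rw [hinf, hσstar]
        simp only [favg, ← Finset.mul_sum, Finset.sum_sub_distrib]
        ring

/-- **Proposition (the Expected Residual condition holds under arbitrary sampling with
finite second moments), with `A = max_i L i · E[v i ^ 2]`, `B = 0`, `C = 2·A·σ*`.** -/
theorem ER_of_arbitrary_sampling
    {d n : ℕ} (hn : 0 < n)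
    (f : Fin n → EuclideanSpace ℝ (Fin d) → ℝ)
    (L : Fin n → ℝ) (hLnonneg : ∀ i, 0 ≤ L i)
    (hdiff : ∀ i, Differentiable ℝ (f i))
    (hsmooth : ∀ i, LipschitzWith (L i).toNNReal (gradient (f i)))
    (hbelow : ∀ i, BddBelow (Set.range (f i)))
    (xstar : EuclideanSpace ℝ (Fin d)) (hmin : ∀ y, favg f xstar ≤ favg f y)
    (𝒟 : Measure (Fin n → ℝ)) [IsProbabilityMeasure 𝒟]
    (hunbiased : ∀ i, ∫ v, v i ∂𝒟 = 1)
    -- finite second moments `E[v i ^ 2] < ∞`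
    (hv2 : ∀ i, Integrable (fun v => (v i) ^ 2) 𝒟)
    -- `σ* = (1/n) ∑ i, (f i x* − inf f i)` and `A = max_i L i · E[v i ^ 2]`
    (σstar A : ℝ)
    (hσstar : σstar = (n : ℝ)⁻¹ * ∑ i, (f i xstar - ⨅ y, f i y))
    (hAdef : A = Finset.univ.sup'
      (Finset.univ_nonempty_iff.mpr (Fin.pos_iff_nonempty.mp hn))
      (fun i => L i * ∫ v, (v i) ^ 2 ∂𝒟)) :
    ∀ x, ∫ v, ‖sgrad f x v‖ ^ 2 ∂𝒟 ≤
      2 * A * (favg f x - ⨅ y, favg f y) + 2 * A * σstar :=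
  ER_of_arbitrary_sampling_general hn f L hLnonneg hdiff hsmooth hbelow xstar hmin 𝒟 hv2 σstar A
    hσstar hAdef

end
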